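/- Uniqueness of the two-sided solution (pathwise form): let ε > 0 and let b : ℝ → ℝ be continuous. Then there is at most one continuous function l : ℝ → ℝ such that l_t = l_s + 2(b_t − b_s) − 2ε ∫_s^t sinh(l_u) du for all real numbers s ≤ t; that is, any two continuous functions on the whole real line satisfying this family of integral equations coincide. -/

import Mathlib

/-!
Subtracting the two equations cancels the noise, so `d = l₁ - l₂` is differentiable with
`d' = -2ε (sinh l₁ - sinh l₂)`. Since `sinh a - sinh b = 4 cosh((a+b)/2) sinh((a-b)/4) cosh((a-b)/4)`,
the bounded function `u = tanh (d / 4)` solves the linear equation `u' = -2ε cosh((l₁+l₂)/2) u`,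
whose rate is at least `2ε`. Then `u² e^{4εt}` is nonincreasing, and letting the initial time go
to `-∞` forces `u = 0`.
-/

open MeasureTheory intervalIntegral Real

theorem Real.hasDerivAt_tanh (x : ℝ) : HasDerivAt tanh (1 / cosh x ^ 2) x := by
  have h := (hasDerivAt_sinh x).div (hasDerivAt_cosh x) (cosh_pos x).ne'
  rw [← sq, ← sq, cosh_sq_sub_sinh_sq] at h
  exact (funext tanh_eq_sinh_div_cosh : tanh = sinh / cosh) ▸ h

theorem Real.sinh_sub_sinh (a b : ℝ) :
    sinh a - sinh b = 4 * cosh ((a + b) / 2) * tanh ((a - b) / 4) * cosh ((a - b) / 4) ^ 2 := by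
  have hab : a = (a + b) / 2 + 2 * ((a - b) / 4) ∧ b = (a + b) / 2 - 2 * ((a - b) / 4) :=
    ⟨by ring, by ring⟩
  set m := (a + b) / 2
  set q := (a - b) / 4
  rw [hab.1, hab.2, sinh_add, sinh_sub, sinh_two_mul, cosh_two_mul, tanh_eq_sinh_div_cosh]
  field_simp [(cosh_pos q).ne']
  ring

theorem hasDerivAt_of_forall_eq_add_integral {d f : ℝ → ℝ} (hf : Continuous f)
    (hd : ∀ s t, s ≤ t → d t = d s + ∫ u in s..t, f u) (t : ℝ) : HasDerivAt d (f t) t := by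
  have hint : HasDerivAt (fun x => d (t - 1) + ∫ u in (t - 1)..x, f u) (f t) t :=
    (integral_hasDerivAt_right (hf.intervalIntegrable _ _) (hf.stronglyMeasurableAtFilter _ _)
      hf.continuousAt).const_add _
  refine hint.congr_of_eventuallyEq ?_
  filter_upwards [Ioi_mem_nhds (sub_one_lt t)] with x hx
  exact hd _ _ hx.le

theorem hasDerivAt_sub_of_integral_equation {σ c : ℝ} {F b l₁ l₂ : ℝ → ℝ} (hF : Continuous F)
    (hl₁ : Continuous l₁) (hl₂ : Continuous l₂)
    (heq₁ : ∀ s t : ℝ, s ≤ t → l₁ t = l₁ s + σ * (b t - b s) - c * ∫ u in s..t, F (l₁ u))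
    (heq₂ : ∀ s t : ℝ, s ≤ t → l₂ t = l₂ s + σ * (b t - b s) - c * ∫ u in s..t, F (l₂ u))
    (t : ℝ) : HasDerivAt (fun x => l₁ x - l₂ x) (-(c * (F (l₁ t) - F (l₂ t)))) t := by
  have hF₁ : Continuous fun u => F (l₁ u) := hF.comp hl₁
  have hF₂ : Continuous fun u => F (l₂ u) := hF.comp hl₂
  refine hasDerivAt_of_forall_eq_add_integral (f := fun u => -(c * (F (l₁ u) - F (l₂ u))))
    (by fun_prop) (fun s t hst => ?_) t
  rw [heq₁ s t hst, heq₂ s t hst, intervalIntegral.integral_neg,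
    intervalIntegral.integral_const_mul,
    integral_sub (hF₁.intervalIntegrable _ _) (hF₂.intervalIntegrable _ _)]
  ring

theorem hasDerivAt_tanh_quarter_sub {c t : ℝ} {l₁ l₂ : ℝ → ℝ}
    (hd : HasDerivAt (fun x => l₁ x - l₂ x) (-(c * (sinh (l₁ t) - sinh (l₂ t)))) t) :
    HasDerivAt (fun x => tanh ((l₁ x - l₂ x) / 4))
      (-(c * cosh ((l₁ t + l₂ t) / 2) * tanh ((l₁ t - l₂ t) / 4))) t := by
  refine ((hasDerivAt_tanh _).comp t (hd.div_const 4)).congr_deriv ?_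
  rw [sinh_sub_sinh]
  field_simp [(cosh_pos ((l₁ t - l₂ t) / 4)).ne']

theorem eq_zero_of_bounded_of_hasDerivAt_neg_mul {u k : ℝ → ℝ} {κ C : ℝ} (hκ : 0 < κ)
    (hk : ∀ t, κ ≤ k t) (hu : ∀ t, HasDerivAt u (-(k t * u t)) t) (hC : ∀ t, |u t| ≤ C) :
    u = 0 := by
  have hanti : Antitone fun t => u t ^ 2 * exp (2 * κ * t) := by
    refine antitone_of_hasDerivAt_nonpos
      (f' := fun t => -(2 * (k t - κ) * u t ^ 2 * exp (2 * κ * t))) (fun t => ?_) (fun t => ?_)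
    · refine (((hu t).fun_pow 2).fun_mul
        ((hasDerivAt_id' t).const_mul (2 * κ)).exp).congr_deriv ?_
      push_cast
      ring
    · have := sub_nonneg.2 (hk t)
      simp only [Pi.zero_apply, neg_nonpos]
      positivity
  have htend : Filter.Tendsto (fun s => C ^ 2 * exp (2 * κ * s)) Filter.atBot (nhds 0) := by
    simpa using (tendsto_exp_atBot.comp
      (Filter.tendsto_id.const_mul_atBot (by positivity : 0 < 2 * κ))).const_mul (C ^ 2)
  funext t
  have hle : u t ^ 2 * exp (2 * κ * t) ≤ 0 := by
    refine ge_of_tendsto htend (Filter.eventually_atBot.2 ⟨t, fun s hs => ?_⟩)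
    exact (hanti hs).trans (mul_le_mul_of_nonneg_right
      (sq_le_sq.2 ((hC s).trans (le_abs_self C))) (exp_pos _).le)
  exact pow_eq_zero_iff two_ne_zero |>.1
    (le_antisymm (nonpos_of_mul_nonpos_left hle (exp_pos _)) (sq_nonneg _))

theorem two_sided_uniqueness_general
    (ε : ℝ) (hε : 0 < ε)
    (b l₁ l₂ : ℝ → ℝ)
    (hl₁ : Continuous l₁) (hl₂ : Continuous l₂)
    (heq₁ : ∀ s t : ℝ, s ≤ t →
      l₁ t = l₁ s + 2 * (b t - b s) - 2 * ε * ∫ u in s..t, Real.sinh (l₁ u))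
    (heq₂ : ∀ s t : ℝ, s ≤ t →
      l₂ t = l₂ s + 2 * (b t - b s) - 2 * ε * ∫ u in s..t, Real.sinh (l₂ u)) :
    l₁ = l₂ := by
  have hu : ∀ t, HasDerivAt (fun x => tanh ((l₁ x - l₂ x) / 4))
      (-(2 * ε * cosh ((l₁ t + l₂ t) / 2) * tanh ((l₁ t - l₂ t) / 4))) t := fun t =>
    hasDerivAt_tanh_quarter_sub
      (hasDerivAt_sub_of_integral_equation continuous_sinh hl₁ hl₂ heq₁ heq₂ t)
  have hu0 : (fun x => tanh ((l₁ x - l₂ x) / 4)) = 0 :=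
    eq_zero_of_bounded_of_hasDerivAt_neg_mul (by positivity : 0 < 2 * ε)
      (fun t => le_mul_of_one_le_right (by positivity) (one_le_cosh _)) hu
      (fun t => (abs_tanh_lt_one _).le)
  funext t
  have h := congrFun hu0 t
  rw [Pi.zero_apply, ← tanh_zero] at h
  linarith [tanh_injective h]

/-- Uniqueness of the two-sided solution (pathwise form): for `ε > 0` and a continuous
`b : ℝ → ℝ`, any two continuous functions `l¹, l² : ℝ → ℝ` satisfying
`l t = l s + 2 (b t − b s) − 2ε ∫_s^t sinh (l u) du` for all `s ≤ t` coincide. -/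
theorem two_sided_uniqueness
    (ε : ℝ) (hε : 0 < ε)
    (b l₁ l₂ : ℝ → ℝ)
    (hb : Continuous b) (hl₁ : Continuous l₁) (hl₂ : Continuous l₂)
    (heq₁ : ∀ s t : ℝ, s ≤ t →
      l₁ t = l₁ s + 2 * (b t - b s) - 2 * ε * ∫ u in s..t, Real.sinh (l₁ u))
    (heq₂ : ∀ s t : ℝ, s ≤ t →
      l₂ t = l₂ s + 2 * (b t - b s) - 2 * ε * ∫ u in s..t, Real.sinh (l₂ u)) :
    l₁ = l₂ :=
  two_sided_uniqueness_general ε hε b l₁ l₂ hl₁ hl₂ heq₁ heq₂
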